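/- arXiv:2411.10938 — 5 statements merged into one kernel-verified Lean document; each statement's English description precedes it below -/
import Mathlib

section
/- Every general multichannel spectrally sparse signal admits a multichannel Hankel–Toeplitz factorization: S_0^L ⊆ S_MF^L. -/
open Matrix Complex BigOperators
open scoped ComplexOrder

noncomputable section

/-- The Hankel operator `𝓗 : ℂ^N → ℂ^{n×n}`, `N = 2n-1` (0-indexed). -/
def hk (n : ℕ) (x : Fin (2*n-1) → ℂ) : Matrix (Fin n) (Fin n) ℂ :=
  Matrix.of fun j k => x ⟨j.1 + k.1, by have h1 := j.2; have h2 := k.2; omega⟩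

/-- The Toeplitz operator `𝓣 : ℂ^N → ℂ^{n×n}`, `N = 2n-1` (0-indexed). -/
def tp (n : ℕ) (t : Fin (2*n-1) → ℂ) : Matrix (Fin n) (Fin n) ℂ :=
  Matrix.of fun j k => t ⟨n - 1 + j.1 - k.1, by have h1 := j.2; have h2 := k.2; omega⟩

/-- The steering matrix `A(f) ∈ ℂ^{N×K}` with `A(f)_{jk} = e^{-i2π f_k (j-1)}` (1-indexed). -/
def Afull (n K : ℕ) (f : Fin K → ℝ) : Matrix (Fin (2*n-1)) (Fin K) ℂ :=
  Matrix.of fun j k => Complex.exp (Complex.I * Complex.ofReal (-(2 * Real.pi * f k * (j.1 : ℝ))))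

/-- The matrix `A ∈ ℂ^{n×K}` formed by the first `n` rows of `A(f)`. -/
def An (n K : ℕ) (f : Fin K → ℝ) : Matrix (Fin n) (Fin K) ℂ :=
  Matrix.of fun j k => Afull n K f ⟨j.1, by have h1 := j.2; omega⟩ k

/-- `S_0^L`: general multichannel spectrally sparse signals `X = A(f)S`. -/
def S0L (n K L : ℕ) : Set (Matrix (Fin (2*n-1)) (Fin L) ℂ) :=
  {X | ∃ (f : Fin K → ℝ) (S : Matrix (Fin K) (Fin L) ℂ),
    (∀ k, f k ∈ Set.Ico (0:ℝ) 1) ∧ X = Afull n K f * S}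

/-- `S_HT^L`: the rank-constrained PSD Hankel-Toeplitz set. -/
def SHTL (n K L : ℕ) : Set (Matrix (Fin (2*n-1)) (Fin L) ℂ) :=
  {X | ∃ (tl : Fin L → Fin (2*n-1) → ℂ) (t : Fin (2*n-1) → ℂ),
    (∀ m, ∑ l, tl l m = (L : ℂ) * t m) ∧
    ∀ l, (Matrix.fromBlocks (tp n (fun m => star (tl l m))) (hk n (fun m => star (X m l)))
            (hk n (fun m => X m l)) (tp n t)).PosSemidef ∧
         (Matrix.fromBlocks (tp n (fun m => star (tl l m))) (hk n (fun m => star (X m l)))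
            (hk n (fun m => X m l)) (tp n t)).rank ≤ K}

/-- `S_MF^L`: the multichannel Hankel-Toeplitz matrix factorization set. -/
def SMFL (n K L : ℕ) : Set (Matrix (Fin (2*n-1)) (Fin L) ℂ) :=
  {X | ∃ (tl : Fin L → Fin (2*n-1) → ℂ) (Z1 Z2 : Fin L → Matrix (Fin n) (Fin K) ℂ),
    ∀ l, hk n (fun m => X m l) = Z2 l * (Z1 l)ᴴ ∧
         tp n (fun m => star (tl l m)) = Z1 l * (Z1 l)ᴴ ∧
         (L : ℂ)⁻¹ • (∑ q, tp n (tl q)) = Z2 l * (Z2 l)ᴴ}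


lemma exp_I_add (a b : ℝ) :
    Complex.exp (Complex.I * (a:ℂ)) * Complex.exp (Complex.I * (b:ℂ))
      = Complex.exp (Complex.I * ((a+b : ℝ):ℂ)) := by
  rw [← Complex.exp_add]; push_cast; ring_nf

lemma star_exp_I (a : ℝ) :
    star (Complex.exp (Complex.I * (a:ℂ))) = Complex.exp (Complex.I * ((-a : ℝ):ℂ)) := by
  have : (starRingEnd ℂ) (Complex.exp (Complex.I * (a:ℂ)))
      = Complex.exp ((starRingEnd ℂ) (Complex.I * (a:ℂ))) := (Complex.exp_conj _).symm
  rw [show (star (Complex.exp (Complex.I * (a:ℂ)))) = (starRingEnd ℂ) (Complex.exp (Complex.I * (a:ℂ))) from rfl, this]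
  congr 1
  simp [Complex.conj_I]

lemma star_term (r a : ℝ) :
    star ((r:ℂ) * Complex.exp (Complex.I * (a:ℂ)))
      = (r:ℂ) * Complex.exp (Complex.I * ((-a : ℝ):ℂ)) := by
  rw [star_mul', star_exp_I]
  rw [show star ((r:ℂ)) = (r:ℂ) from by simp [Complex.star_def, Complex.conj_ofReal]]

/-- Every general multichannel spectrally sparse signal admits a multichannel
Hankel–Toeplitz factorization: `S_0^L ⊆ S_MF^L`. -/
theorem S0L_subset_SMFL (n K L : ℕ) (hn : 1 ≤ n) (hK : 1 ≤ K) (hL : 1 ≤ L) :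
    S0L n K L ⊆ SMFL n K L := by
  intro X hX
  obtain ⟨f, S, hf, rfl⟩ := hX
  set σ : Fin K → ℝ := fun k => (∑ q, Complex.normSq (S k q)) / L with hσdef
  set c : Fin K → ℝ := fun k => Real.sqrt (Real.sqrt (σ k)) with hcdef
  set e : Fin L → Fin K → ℂ :=
    fun l k => if σ k = 0 then 0 else (starRingEnd ℂ) (S k l) / (c k) with hedef
  have hσnn : ∀ k, 0 ≤ σ k := by
    intro k
    apply div_nonneg _ (Nat.cast_nonneg _)
    exact Finset.sum_nonneg fun q _ => Complex.normSq_nonneg _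
  have hc2 : ∀ k, c k ^ 2 = Real.sqrt (σ k) := fun k => Real.sq_sqrt (Real.sqrt_nonneg _)
  have hc4 : ∀ k, (c k ^ 2) * (c k ^ 2) = σ k := by
    intro k; rw [hc2]; exact Real.mul_self_sqrt (hσnn k)
  have hS0 : ∀ k, σ k = 0 → ∀ l, S k l = 0 := by
    intro k hk0 l
    have hL0 : (L:ℝ) ≠ 0 := by positivity
    rw [hσdef] at hk0
    rw [div_eq_zero_iff] at hk0
    have hsum : (∑ q, Complex.normSq (S k q)) = 0 := by tauto
    have := (Finset.sum_eq_zero_iff_of_nonneg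
      (fun q _ => Complex.normSq_nonneg (S k q))).1 hsum l (Finset.mem_univ l)
    exact Complex.normSq_eq_zero.1 this
  have hcne : ∀ k, σ k ≠ 0 → (c k : ℝ) ≠ 0 := by
    intro k h
    have : 0 < σ k := lt_of_le_of_ne (hσnn k) (Ne.symm h)
    have : 0 < c k := Real.sqrt_pos.2 (Real.sqrt_pos.2 this)
    exact ne_of_gt this
  have key1 : ∀ l k, (c k : ℂ) * star (e l k) = S k l := by
    intro l k
    by_cases h : σ k = 0
    · simp [hedef, h, hS0 k h l]
    · simp only [hedef, if_neg h]
      rw [show star ((starRingEnd ℂ) (S k l) / (c k : ℂ))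
        = S k l / (c k : ℂ) by simp [div_eq_mul_inv]]
      field_simp [Complex.ofReal_ne_zero.2 (hcne k h)]
  have key2 : ∀ k, (∑ q, Complex.normSq (e q k)) / L = c k ^ 2 := by
    intro k
    by_cases h : σ k = 0
    · have hc0 : c k = 0 := by simp [hcdef, h]
      simp [hedef, h, hc0]
    · have hc : (c k : ℝ) ≠ 0 := hcne k h
      have he' : ∀ q, Complex.normSq (e q k) = Complex.normSq (S k q) / (c k ^ 2) := by
        intro q
        simp only [hedef, if_neg h]
        rw [Complex.normSq_div, Complex.normSq_conj, Complex.normSq_ofReal]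
        ring_nf
      calc (∑ q, Complex.normSq (e q k)) / L
          = ((∑ q, Complex.normSq (S k q)) / L) / (c k ^ 2) := by
            simp only [he']
            rw [← Finset.sum_div]
            ring
        _ = σ k / (c k ^ 2) := by rw [hσdef]
        _ = c k ^ 2 := by
            rw [← hc4 k]
            field_simp
  have hidx : ∀ (j j' : Fin n), ((n - 1 + j.1 - j'.1 : ℕ) : ℝ) = (n:ℝ) - 1 + j.1 - j'.1 := by
    intro j j'
    have h1 : (n - 1 + j.1 - j'.1) + j'.1 = (n - 1) + j.1 := by
      have := j.2; have := j'.2; omega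
    have h2 : ((n - 1 + j.1 - j'.1 : ℕ):ℝ) + (j'.1:ℝ) = ((n-1:ℕ):ℝ) + (j.1:ℝ) := by
      exact_mod_cast congrArg (Nat.cast : ℕ → ℝ) h1
    have h3 : ((n-1:ℕ):ℝ) = (n:ℝ) - 1 := by
      push_cast [Nat.cast_sub hn]; ring
    linarith
  refine ⟨fun l m => ∑ k, (Complex.normSq (e l k) : ℂ) *
      Complex.exp (Complex.I * ((-(2 * Real.pi * f k * ((m.1:ℝ) - ((n:ℝ)-1))) : ℝ) : ℂ)),
    fun l => Matrix.of fun j k => star (An n K f j k) * e l k,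
    fun l => Matrix.of fun j k => An n K f j k * (c k : ℂ),
    fun l => ⟨?_, ?_, ?_⟩⟩
  · -- Hankel factorization
    ext j j'
    simp only [hk, Matrix.of_apply, Matrix.mul_apply, Matrix.conjTranspose_apply, An, Afull,
      star_mul', star_star]
    refine Finset.sum_congr rfl fun k _ => ?_
    have h1 : Complex.exp (Complex.I * ((-(2 * Real.pi * f k * ((j.1:ℕ):ℝ)) : ℝ):ℂ)) *
        Complex.exp (Complex.I * ((-(2 * Real.pi * f k * ((j'.1:ℕ):ℝ)) : ℝ):ℂ))
        = Complex.exp (Complex.I * ((-(2 * Real.pi * f k * (((j.1 + j'.1 : ℕ)):ℝ)) : ℝ):ℂ)) := by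
      rw [exp_I_add]; congr 2; push_cast; ring
    rw [← key1 l k, ← h1]
    ring
  · -- first Toeplitz identity
    ext j j'
    simp only [tp, Matrix.of_apply, Matrix.mul_apply, Matrix.conjTranspose_apply]
    rw [star_sum]
    refine Finset.sum_congr rfl fun k _ => ?_
    rw [star_term]
    simp only [An, Afull, Matrix.of_apply, star_mul', star_star, star_exp_I]
    have hz : (Complex.normSq (e l k) : ℂ) = e l k * star (e l k) := by
      rw [show star (e l k) = (starRingEnd ℂ) (e l k) from rfl, Complex.mul_conj]
    rw [hz]
    have harg : (-(-(2 * Real.pi * f k * (((n - 1 + j.1 - j'.1 : ℕ):ℝ) - ((n:ℝ)-1)))) : ℝ)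
        = (-(-(2 * Real.pi * f k * (j.1:ℝ))) : ℝ) + (-(2 * Real.pi * f k * (j'.1:ℝ)) : ℝ) := by
      rw [hidx j j']; ring
    rw [harg, ← exp_I_add]
    ring
  · -- second Toeplitz identity
    ext j j'
    simp only [Matrix.smul_apply, Matrix.sum_apply, tp, Matrix.of_apply, Matrix.mul_apply,
      Matrix.conjTranspose_apply, An, Afull, star_mul', star_star, star_exp_I, smul_eq_mul]
    rw [Finset.sum_comm, Finset.mul_sum]
    refine Finset.sum_congr rfl fun k _ => ?_
    rw [show star ((c k : ℂ)) = (c k : ℂ) from by simp [Complex.star_def, Complex.conj_ofReal]]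
    rw [← Finset.sum_mul, ← Complex.ofReal_sum]
    have hco : (L:ℂ)⁻¹ * ((((∑ q, Complex.normSq (e q k)) : ℝ)):ℂ) = ((c k ^ 2 : ℝ):ℂ) := by
      rw [← key2 k]
      have hL0 : (L:ℂ) ≠ 0 := by positivity
      push_cast
      field_simp
    have harg : (-(2 * Real.pi * f k * (((n - 1 + j.1 - j'.1 : ℕ):ℝ) - ((n:ℝ)-1))) : ℝ)
        = (-(2 * Real.pi * f k * (j.1:ℝ)) : ℝ) + (-(-(2 * Real.pi * f k * (j'.1:ℝ))) : ℝ) := by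
      rw [hidx j j']; ring
    rw [← mul_assoc, hco, harg, ← exp_I_add]
    push_cast
    ring
end
end

section
/- Assume 1 ≤ K < n and L ≥ 1. Then the constant-amplitude factorization set equals the constant-amplitude rank-constrained PSD Hankel–Toeplitz set: S_MF^C = S_HT^C. -/
/-!
A block matrix `M = [[conj P, conj Q], [Q, P]]` is unchanged by entrywise conjugation followed
by swapping both block rows and block columns. Conjugating by `Φ = [[1, i], [1, -i]]` turns this
symmetry into realness: `Φᴴ M Φ` is a real positive semidefinite matrix of rank at most `K`, so by
the real spectral theorem it equals `G Gᵀ` with `G` real of width `K`. Then `B = Φ G / 2` satisfies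
`M = B Bᴴ` and has the shape `[conj Z; Z]`, which reads `Q = Z Zᵀ`, `P = Z Zᴴ`. Conversely
`[conj Z; Z] [conj Z; Z]ᴴ` is such a block matrix, positive semidefinite of rank at most `K`.
-/

open Matrix Complex BigOperators
open scoped ComplexOrder

noncomputable section

/-- `S_0^C`: constant-amplitude multichannel signals `X = A(f) diag(b) Φ`. -/
def S0C (n K L : ℕ) : Set (Matrix (Fin (2*n-1)) (Fin L) ℂ) :=
  {X | ∃ (f : Fin K → ℝ) (b : Fin K → ℝ) (Φ : Matrix (Fin K) (Fin L) ℂ),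
    (∀ k, f k ∈ Set.Ico (0:ℝ) 1) ∧ (∀ k, 0 < b k) ∧ (∀ k l, ‖Φ k l‖ = 1) ∧
    X = Afull n K f * Matrix.diagonal (fun k => (b k : ℂ)) * Φ}

/-- `S_HT^C`: the constant-amplitude rank-constrained PSD Hankel-Toeplitz set. -/
def SHTC (n K L : ℕ) : Set (Matrix (Fin (2*n-1)) (Fin L) ℂ) :=
  {X | ∃ (t : Fin (2*n-1) → ℂ), ∀ l,
    (Matrix.fromBlocks (tp n (fun m => star (t m))) (hk n (fun m => star (X m l)))
       (hk n (fun m => X m l)) (tp n t)).PosSemidef ∧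
    (Matrix.fromBlocks (tp n (fun m => star (t m))) (hk n (fun m => star (X m l)))
       (hk n (fun m => X m l)) (tp n t)).rank ≤ K}

/-- `S_MF^C`: the constant-amplitude Hankel-Toeplitz factorization set. -/
def SMFC (n K L : ℕ) : Set (Matrix (Fin (2*n-1)) (Fin L) ℂ) :=
  {X | ∃ (t : Fin (2*n-1) → ℂ) (Z : Fin L → Matrix (Fin n) (Fin K) ℂ),
    ∀ l, hk n (fun m => X m l) = Z l * (Z l)ᵀ ∧ tp n t = Z l * (Z l)ᴴ}

namespace Matrix

section

variable {m n : Type*} [Fintype n]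

theorem rank_map_ringHom {K L : Type*} [Field K] [Field L] (f : K →+* L)
    (A : Matrix n n K) : (A.map f).rank = A.rank := by
  classical
  obtain ⟨V, U, e, hV, hU, hVAU⟩ := A.exists_rank_normal_form
  obtain ⟨d, hd⟩ : ∃ d, V * A * U = diagonal d := ⟨_, by
    rw [hVAU, ← diagonal_one, ← diagonal_zero, fromBlocks_diagonal, submatrix_diagonal_equiv]⟩
  have hV' : IsUnit (V.map f).det := (isUnit_iff_isUnit_det _).mp (hV.map f.mapMatrix)
  have hU' : IsUnit (U.map f).det := (isUnit_iff_isUnit_det _).mp (hU.map f.mapMatrix)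
  calc (A.map f).rank = (V.map f * A.map f * U.map f).rank := by
        rw [rank_mul_eq_left_of_isUnit_det _ _ hU', rank_mul_eq_right_of_isUnit_det _ _ hV']
    _ = (diagonal d).rank := by
        rw [← Matrix.map_mul, ← Matrix.map_mul, hd, diagonal_map (map_zero f)]
        simp [rank_diagonal]
    _ = A.rank := by
        rw [← hd, rank_mul_eq_left_of_isUnit_det _ _ ((isUnit_iff_isUnit_det _).mp hU),
          rank_mul_eq_right_of_isUnit_det _ _ ((isUnit_iff_isUnit_det _).mp hV)]

theorem PosSemidef.of_map_algebraMap {A : Matrix n n ℝ}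
    (hA : (A.map (algebraMap ℝ ℂ)).PosSemidef) : A.PosSemidef := by
  refine posSemidef_iff_dotProduct_mulVec.mpr ⟨?_, fun x => ?_⟩
  · exact (isHermitian_map_iff (fun _ => by simp) (algebraMap ℝ ℂ).injective).mp hA.1
  · have hx := hA.dotProduct_mulVec_nonneg (x ·)
    have hquad : star (x · : n → ℂ) ⬝ᵥ (A.map (algebraMap ℝ ℂ) *ᵥ (x ·)) =
        (star x ⬝ᵥ (A *ᵥ x) : ℝ) := by
      simp [dotProduct, mulVec]
    rwa [hquad, Complex.zero_le_real] at hx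

theorem exists_mul_conjTranspose_eq_of_card_le {α : Type*} [Semiring α] [StarRing α]
    {X : Matrix m n α} (p : n → Prop) [DecidablePred p] {K : ℕ}
    (hp : Fintype.card {j // p j} ≤ K) (hX : ∀ i j, ¬ p j → X i j = 0) :
    ∃ G : Matrix m (Fin K) α, G * Gᴴ = X * Xᴴ := by
  let e : {j // p j} ⊕ Fin (K - Fintype.card {j // p j}) ≃ Fin K :=
    Fintype.equivFinOfCardEq (by simp; omega)
  refine ⟨(fromCols (X.submatrix id (↑)) 0).submatrix id e.symm, ?_⟩
  rw [conjTranspose_submatrix, submatrix_mul_equiv,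
    conjTranspose_fromCols_eq_fromRows_conjTranspose, fromCols_mul_fromRows, conjTranspose_zero,
    Matrix.mul_zero, add_zero, submatrix_id_id]
  ext i k
  have hzero : ∑ j : {j // ¬ p j}, X i j * star (X k j) = 0 :=
    Finset.sum_eq_zero fun j _ => by rw [hX i j j.2, zero_mul]
  simp only [mul_apply, conjTranspose_apply, submatrix_apply, id]
  rw [← Fintype.sum_subtype_add_sum_subtype p, hzero, add_zero]

theorem PosSemidef.exists_eq_mul_conjTranspose_of_rank_le {𝕜 : Type*} [RCLike 𝕜]
    {A : Matrix n n 𝕜} (hA : A.PosSemidef) {K : ℕ} (hK : A.rank ≤ K) :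
    ∃ G : Matrix n (Fin K) 𝕜, A = G * Gᴴ := by
  classical
  set U : Matrix n n 𝕜 := (hA.1.eigenvectorUnitary : Matrix n n 𝕜)
  set D : Matrix n n 𝕜 := diagonal fun i => ((√(hA.1.eigenvalues i) : ℝ) : 𝕜)
  have hD : D * Dᴴ = diagonal (RCLike.ofReal ∘ hA.1.eigenvalues) := by
    rw [diagonal_conjTranspose, diagonal_mul_diagonal]
    congr 1
    ext i
    simp [← RCLike.ofReal_mul, Real.mul_self_sqrt (hA.eigenvalues_nonneg i)]
  have hAUD : A = U * D * (U * D)ᴴ := by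
    conv_lhs => rw [hA.1.spectral_theorem, Unitary.conjStarAlgAut_apply, ← hD]
    simp only [conjTranspose_mul, Matrix.mul_assoc, U, star_eq_conjTranspose]
  obtain ⟨G, hG⟩ := exists_mul_conjTranspose_eq_of_card_le (X := U * D) (hA.1.eigenvalues · ≠ 0)
    (hA.1.rank_eq_card_non_zero_eigs ▸ hK) fun i j hj => by simp [D, not_not.mp hj]
  exact ⟨G, hAUD.trans hG.symm⟩

theorem PosSemidef.exists_eq_mul_conjTranspose_of_map_conj_eq
    {R : Matrix n n ℂ} (hR : R.PosSemidef) (hconj : R.map (starRingEnd ℂ) = R) {K : ℕ}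
    (hK : R.rank ≤ K) :
    ∃ G : Matrix n (Fin K) ℂ, R = G * Gᴴ ∧ G.map (starRingEnd ℂ) = G := by
  set R' : Matrix n n ℝ := R.map Complex.re
  have hR' : R'.map (algebraMap ℝ ℂ) = R := by
    ext i j
    exact Complex.conj_eq_iff_re.mp (congrFun (congrFun hconj i) j)
  obtain ⟨G, hG⟩ :=
    (PosSemidef.of_map_algebraMap (hR' ▸ hR)).exists_eq_mul_conjTranspose_of_rank_le (K := K)
      (by rwa [← rank_map_ringHom (algebraMap ℝ ℂ), hR'])
  refine ⟨G.map (algebraMap ℝ ℂ), ?_, by ext; simp⟩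
  rw [← hR', hG, Matrix.map_mul, conjTranspose_map _ (fun _ => by simp)]

theorem fromBlocks_conj_mul_conjTranspose {K : ℕ} (Z : Matrix m (Fin K) ℂ) :
    fromBlocks ((Z * Zᴴ).map (starRingEnd ℂ)) ((Z * Zᵀ).map (starRingEnd ℂ)) (Z * Zᵀ) (Z * Zᴴ) =
      fromRows (Z.map (starRingEnd ℂ)) Z * (fromRows (Z.map (starRingEnd ℂ)) Z)ᴴ := by
  rw [conjTranspose_fromRows_eq_fromCols_conjTranspose, fromRows_mul_fromCols]
  congr 1 <;> ext <;> simp [mul_apply]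

end

/-- `conjPairMatrix n` sends `(u, v)` to `(u + i v, u - i v)`, so it identifies real vectors with
vectors of the form `(w, conj w)`. -/
def conjPairMatrix (n : Type*) [DecidableEq n] : Matrix (n ⊕ n) (n ⊕ n) ℂ :=
  fromBlocks 1 (I • 1) 1 (-I • 1)

section conjPairMatrix

variable {n : Type*} [DecidableEq n]

theorem conjPairMatrix_map_conj :
    (conjPairMatrix n).map (starRingEnd ℂ) = (conjPairMatrix n).submatrix Sum.swap id := by
  ext (i | i) (j | j) <;> by_cases h : i = j <;> simp [conjPairMatrix, h]

variable [Fintype n]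

theorem conjPairMatrix_mul_conjTranspose : conjPairMatrix n * (conjPairMatrix n)ᴴ = 2 := by
  ext (i | i) (j | j) <;> by_cases h : i = j <;>
    simp [conjPairMatrix, mul_apply, one_apply, ofNat_apply, one_add_one_eq_two, h,
      eq_comm (a := j)]

theorem PosSemidef.exists_eq_mul_conjTranspose_of_map_conj_eq_submatrix_swap
    {M : Matrix (n ⊕ n) (n ⊕ n) ℂ} (hM : M.PosSemidef)
    (hconj : M.map (starRingEnd ℂ) = M.submatrix Sum.swap Sum.swap) {K : ℕ} (hK : M.rank ≤ K) :
    ∃ B : Matrix (n ⊕ n) (Fin K) ℂ,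
      M = B * Bᴴ ∧ B.map (starRingEnd ℂ) = B.submatrix Sum.swap id := by
  set Φ := conjPairMatrix n
  have hΦ : (Φᴴ).map (starRingEnd ℂ) = Φᴴ.submatrix id Sum.swap := by
    rw [conjTranspose_map (starRingEnd ℂ) (fun _ => by simp), conjPairMatrix_map_conj,
      conjTranspose_submatrix]
  have hreal : (Φᴴ * M * Φ).map (starRingEnd ℂ) = Φᴴ * M * Φ := by
    have hswap : Function.Bijective (@Sum.swap n n) := (Equiv.sumComm n n).bijective
    rw [Matrix.map_mul, Matrix.map_mul, hΦ, hconj, conjPairMatrix_map_conj,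
      ← submatrix_mul _ _ _ _ _ hswap, ← submatrix_mul _ _ _ _ _ hswap, submatrix_id_id]
  obtain ⟨G, hRG, hG⟩ :=
    (hM.conjTranspose_mul_mul_same Φ).exists_eq_mul_conjTranspose_of_map_conj_eq hreal
      ((rank_mul_le_left _ _).trans ((rank_mul_le_right _ _).trans hK))
  refine ⟨(2 : ℂ)⁻¹ • (Φ * G), ?_, ?_⟩
  · have hΦG : Φ * G * (Φ * G)ᴴ = (4 : ℂ) • M := by
      calc Φ * G * (Φ * G)ᴴ = Φ * Φᴴ * M * (Φ * Φᴴ) := by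
            rw [conjTranspose_mul, Matrix.mul_assoc, ← Matrix.mul_assoc G, ← hRG]
            simp only [Matrix.mul_assoc]
        _ = (4 : ℂ) • M := by
            rw [conjPairMatrix_mul_conjTranspose, two_mul, add_mul, mul_two]
            module
    rw [conjTranspose_smul, Matrix.smul_mul, Matrix.mul_smul, smul_smul, hΦG, smul_smul]
    norm_num
  · have hΦG : (Φ * G).map (starRingEnd ℂ) = (Φ * G).submatrix Sum.swap id := by
      rw [Matrix.map_mul, conjPairMatrix_map_conj, hG]
      exact (submatrix_mul _ _ _ id _ Function.bijective_id).symm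
    ext i k
    simpa [map_ofNat] using congrFun (congrFun hΦG i) k

theorem fromBlocks_conj_posSemidef_and_rank_le_iff (P Q : Matrix n n ℂ) {K : ℕ} :
    ((fromBlocks (P.map (starRingEnd ℂ)) (Q.map (starRingEnd ℂ)) Q P).PosSemidef ∧
      (fromBlocks (P.map (starRingEnd ℂ)) (Q.map (starRingEnd ℂ)) Q P).rank ≤ K) ↔
      ∃ Z : Matrix n (Fin K) ℂ, Q = Z * Zᵀ ∧ P = Z * Zᴴ := by
  refine ⟨fun ⟨hpsd, hrank⟩ => ?_, fun ⟨Z, hQ, hP⟩ => ?_⟩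
  · obtain ⟨B, hMB, hB⟩ := hpsd.exists_eq_mul_conjTranspose_of_map_conj_eq_submatrix_swap
      (by ext (i | i) (j | j) <;> simp) hrank
    have hB_inl : ∀ k l, star (B (Sum.inl k) l) = B (Sum.inr k) l := fun k l =>
      congrFun (congrFun hB (Sum.inl k)) l
    refine ⟨B.submatrix Sum.inr id, ?_, ?_⟩
    · ext j k
      simpa [mul_apply, hB_inl] using congrFun (congrFun hMB (Sum.inr j)) (Sum.inl k)
    · ext j k
      simpa [mul_apply] using congrFun (congrFun hMB (Sum.inr j)) (Sum.inr k)
  · rw [hQ, hP, fromBlocks_conj_mul_conjTranspose, rank_self_mul_conjTranspose]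
    exact ⟨posSemidef_self_mul_conjTranspose _, (rank_le_card_width _).trans (by simp)⟩

end conjPairMatrix

end Matrix

theorem SMFC_eq_SHTC_general (n K L : ℕ) :
    SMFC n K L = SHTC n K L := by
  ext X
  refine exists_congr fun t => ?_
  calc _ ↔ ∀ l, ∃ Z : Matrix (Fin n) (Fin K) ℂ, hk n (X · l) = Z * Zᵀ ∧ tp n t = Z * Zᴴ :=
        (Classical.skolem (p := fun l Z => hk n (X · l) = Z * Zᵀ ∧ tp n t = Z * Zᴴ)).symm
    _ ↔ _ := forall_congr' fun l =>
        (fromBlocks_conj_posSemidef_and_rank_le_iff (tp n t) (hk n (X · l))).symm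

/-- Theorem 2: if `1 ≤ K < n` and `L ≥ 1` then `S_MF^C = S_HT^C`. -/
theorem SMFC_eq_SHTC (n K L : ℕ) (hK : 1 ≤ K) (hKn : K < n) (hL : 1 ≤ L) :
    SMFC n K L = SHTC n K L :=
  SMFC_eq_SHTC_general n K L
end
end

section
/- Every constant-amplitude multichannel spectrally sparse signal admits a constant-amplitude Hankel–Toeplitz factorization: S_0^C ⊆ S_MF^C. -/
open Matrix Complex BigOperators
open scoped ComplexOrder

noncomputable section

/-!
With `z_k = e^{-2πi f_k}`, column `l` of `X = A(f) diag(b) Φ` is `x_m = ∑ₖ b_k Φ_{kl} z_kᵐ`.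
Choosing square roots `s_{kl}² = b_k Φ_{kl}`, the scaled Vandermonde factor `Zˡ_{jk} = s_{kl} z_kʲ`
gives `Zˡ (Zˡ)ᵀ = 𝓗 x`. Because `|z_k| = 1` and `|s_{kl}|² = b_k` does not depend on `l`,
`Zˡ (Zˡ)ᴴ = 𝓣 t` with `t_m = ∑ₖ b_k z_k^{m-(n-1)}` for every channel `l`.
-/

section Factorization

variable {ι : Type*} [Fintype ι] (n : ℕ) (z s : ι → ℂ)

def scaledVandermonde : Matrix (Fin n) ι ℂ :=
  Matrix.of fun j p => s p * z p ^ (j : ℕ)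

theorem hk_sum_pow_eq_mul_transpose :
    hk n (fun m => ∑ p, s p ^ 2 * z p ^ (m : ℕ)) =
      scaledVandermonde n z s * (scaledVandermonde n z s)ᵀ := by
  ext j k
  simp only [hk, scaledVandermonde, Matrix.mul_apply, Matrix.of_apply, Matrix.transpose_apply]
  exact Finset.sum_congr rfl fun p _ => by ring

theorem tp_sum_zpow_eq_mul_conjTranspose (hz : ∀ p, ‖z p‖ = 1) :
    tp n (fun m => ∑ p, (normSq (s p) : ℂ) * z p ^ ((m : ℤ) - (n - 1 : ℕ))) =
      scaledVandermonde n z s * (scaledVandermonde n z s)ᴴ := by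
  ext j k
  simp only [tp, scaledVandermonde, Matrix.mul_apply, Matrix.of_apply,
    Matrix.conjTranspose_apply, star_mul', star_pow]
  refine Finset.sum_congr rfl fun p _ => ?_
  have hz0 : z p ≠ 0 := norm_ne_zero_iff.mp (by rw [hz p]; exact one_ne_zero)
  have hexp : ((n - 1 + j - k : ℕ) : ℤ) - (n - 1 : ℕ) = (j : ℕ) - (k : ℕ) := by omega
  rw [hexp, zpow_sub₀ hz0, zpow_natCast, zpow_natCast, ← Complex.mul_conj, Complex.star_def,
    ← Complex.inv_eq_conj (hz p)]
  ring

end Factorization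

theorem Afull_apply (n K : ℕ) (f : Fin K → ℝ) (j : Fin (2 * n - 1)) (k : Fin K) :
    Afull n K f j k = exp (I * (-(2 * Real.pi * f k) : ℝ)) ^ (j : ℕ) := by
  rw [Afull, Matrix.of_apply, ← Complex.exp_nat_mul]
  push_cast
  ring_nf

theorem S0C_subset_SMFC_general (n K L : ℕ) :
    S0C n K L ⊆ SMFC n K L := by
  rintro X ⟨f, b, Φ, -, hb, hΦ, rfl⟩
  set z : Fin K → ℂ := fun k => exp (I * (-(2 * Real.pi * f k) : ℝ))
  choose s hs using fun l k => IsAlgClosed.exists_pow_nat_eq ((b k : ℂ) * Φ k l) two_pos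
  have hnormSq : ∀ l k, (normSq (s l k) : ℂ) = b k := by
    intro l k
    rw [Complex.normSq_eq_norm_sq, ← norm_pow, hs, norm_mul, hΦ, mul_one, Complex.norm_real,
      Real.norm_of_nonneg (hb k).le]
  refine ⟨fun m => ∑ k, (b k : ℂ) * z k ^ ((m : ℤ) - (n - 1 : ℕ)),
    fun l => scaledVandermonde n z (s l), fun l => ⟨?_, ?_⟩⟩
  · rw [← hk_sum_pow_eq_mul_transpose]
    congr 1
    ext m
    rw [Matrix.mul_apply]
    simp only [Matrix.mul_diagonal, Afull_apply, hs]
    exact Finset.sum_congr rfl fun k _ => by ring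
  · simp_rw [← tp_sum_zpow_eq_mul_conjTranspose n z (s l) (fun k => norm_exp_I_mul_ofReal _),
      hnormSq]

/-- Every constant-amplitude multichannel spectrally sparse signal admits a
constant-amplitude Hankel–Toeplitz factorization: `S_0^C ⊆ S_MF^C`. -/
theorem S0C_subset_SMFC (n K L : ℕ) (hn : 1 ≤ n) (hK : 1 ≤ K) (hL : 1 ≤ L) :
    S0C n K L ⊆ SMFC n K L :=
  S0C_subset_SMFC_general n K L
end
end

section
/- Every signal admitting a constant-amplitude Hankel–Toeplitz factorization lies in the constant-amplitude rank-constrained PSD Hankel–Toeplitz set: S_MF^C ⊆ S_HT^C. In particular, if 𝓗 X_{:,l} = Z^l (Z^l)^T and 𝓣 t = Z^l (Z^l)^H for all l, then for every l the 2n×2n block matrix [[𝓣 conj(t), 𝓗 conj(X_{:,l})],[𝓗 X_{:,l}, 𝓣 t]] equals W^l (W^l)^H with W^l = [conj(Z^l); Z^l] ∈ ℂ^{2n×K}, hence is positive semidefinite with rank at most K. -/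
open Matrix Complex BigOperators
open scoped ComplexOrder

/-! With `W = [conj Z; Z]`, the Gram matrix `W Wᴴ` has blocks `conj (Z Zᴴ)`, `conj (Z Zᵀ)`,
`Z Zᵀ`, `Z Zᴴ`; since `𝓣` and `𝓗` commute with entrywise conjugation, these are exactly the
blocks of the Hankel–Toeplitz matrix, which is therefore PSD of rank at most `K`. -/

namespace Matrix

variable {m κ R : Type*}

theorem fromRows_map_star_mul_conjTranspose [Fintype κ] [CommRing R] [StarRing R]
    (Z : Matrix m κ R) :
    fromRows (Z.map star) Z * (fromRows (Z.map star) Z)ᴴ =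
      fromBlocks ((Z * Zᴴ).map star) ((Z * Zᵀ).map star) (Z * Zᵀ) (Z * Zᴴ) := by
  rw [conjTranspose_fromRows_eq_fromCols_conjTranspose, fromRows_mul_fromCols]
  congr 1 <;> ext <;> simp [mul_apply, mul_comm]

theorem of_sumElim_star_eq_fromRows [Star R] (Z : Matrix m κ R) :
    (of fun (i : m ⊕ m) (k : κ) => Sum.elim (fun j => star (Z j k)) (fun j => Z j k) i) =
      fromRows (Z.map star) Z := by
  ext (i | i) k <;> rfl

theorem rank_mul_conjTranspose_le_card_width [Fintype m] [Fintype κ] [CommRing R] [StarRing R]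
    [StrongRankCondition R] (W : Matrix m κ R) :
    (W * Wᴴ).rank ≤ Fintype.card κ :=
  (rank_mul_le_left _ _).trans (rank_le_card_width _)

end Matrix

section HankelToeplitz

variable {n : ℕ} {κ : Type*} [Fintype κ] {x t : Fin (2*n-1) → ℂ} {Z : Matrix (Fin n) κ ℂ}

theorem fromBlocks_tp_hk_eq_mul_conjTranspose (hx : hk n x = Z * Zᵀ) (ht : tp n t = Z * Zᴴ) :
    fromBlocks (tp n (fun m => star (t m))) (hk n (fun m => star (x m))) (hk n x) (tp n t) =
      fromRows (Z.map star) Z * (fromRows (Z.map star) Z)ᴴ := by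
  rw [fromRows_map_star_mul_conjTranspose, ← hx, ← ht]
  rfl

theorem posSemidef_fromBlocks_tp_hk (hx : hk n x = Z * Zᵀ) (ht : tp n t = Z * Zᴴ) :
    (fromBlocks (tp n (fun m => star (t m))) (hk n (fun m => star (x m)))
      (hk n x) (tp n t)).PosSemidef := by
  rw [fromBlocks_tp_hk_eq_mul_conjTranspose hx ht]
  exact posSemidef_self_mul_conjTranspose _

theorem rank_fromBlocks_tp_hk_le (hx : hk n x = Z * Zᵀ) (ht : tp n t = Z * Zᴴ) :
    (fromBlocks (tp n (fun m => star (t m))) (hk n (fun m => star (x m)))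
      (hk n x) (tp n t)).rank ≤ Fintype.card κ := by
  rw [fromBlocks_tp_hk_eq_mul_conjTranspose hx ht]
  exact rank_mul_conjTranspose_le_card_width _

end HankelToeplitz

theorem SMFC_subset_SHTC_general (n K L : ℕ) :
    SMFC n K L ⊆ SHTC n K L ∧
    ∀ (X : Matrix (Fin (2*n-1)) (Fin L) ℂ) (t : Fin (2*n-1) → ℂ)
      (Z : Fin L → Matrix (Fin n) (Fin K) ℂ),
      (∀ l, hk n (fun m => X m l) = Z l * (Z l)ᵀ ∧ tp n t = Z l * (Z l)ᴴ) →
      ∀ l,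
        Matrix.fromBlocks (tp n (fun m => star (t m))) (hk n (fun m => star (X m l)))
            (hk n (fun m => X m l)) (tp n t) =
          (Matrix.of fun (i : Fin n ⊕ Fin n) (k : Fin K) =>
              Sum.elim (fun j => star (Z l j k)) (fun j => Z l j k) i) *
          (Matrix.of fun (i : Fin n ⊕ Fin n) (k : Fin K) =>
              Sum.elim (fun j => star (Z l j k)) (fun j => Z l j k) i)ᴴ ∧
        (Matrix.fromBlocks (tp n (fun m => star (t m))) (hk n (fun m => star (X m l)))
            (hk n (fun m => X m l)) (tp n t)).PosSemidef ∧
        (Matrix.fromBlocks (tp n (fun m => star (t m))) (hk n (fun m => star (X m l)))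
            (hk n (fun m => X m l)) (tp n t)).rank ≤ K := by
  refine ⟨fun X ⟨t, Z, h⟩ => ⟨t, fun l => ?_⟩, fun X t Z h l => ⟨?_, ?_, ?_⟩⟩
  · exact ⟨posSemidef_fromBlocks_tp_hk (h l).1 (h l).2,
      Fintype.card_fin K ▸ rank_fromBlocks_tp_hk_le (h l).1 (h l).2⟩
  · rw [of_sumElim_star_eq_fromRows]
    exact fromBlocks_tp_hk_eq_mul_conjTranspose (h l).1 (h l).2
  · exact posSemidef_fromBlocks_tp_hk (h l).1 (h l).2
  · exact Fintype.card_fin K ▸ rank_fromBlocks_tp_hk_le (h l).1 (h l).2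

/-- `S_MF^C ⊆ S_HT^C`; in particular, if `𝓗 X_{:,l} = Z^l (Z^l)^T` and
`𝓣 t = Z^l (Z^l)^H` for all `l`, then for every `l` the block matrix
`[[𝓣 conj(t), 𝓗 conj(X_{:,l})],[𝓗 X_{:,l}, 𝓣 t]]` equals `W^l (W^l)^H` with
`W^l = [conj(Z^l); Z^l]`, hence is PSD with rank at most `K`. -/
theorem SMFC_subset_SHTC (n K L : ℕ) (hn : 1 ≤ n) (hK : 1 ≤ K) (hL : 1 ≤ L) :
    SMFC n K L ⊆ SHTC n K L ∧
    ∀ (X : Matrix (Fin (2*n-1)) (Fin L) ℂ) (t : Fin (2*n-1) → ℂ)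
      (Z : Fin L → Matrix (Fin n) (Fin K) ℂ),
      (∀ l, hk n (fun m => X m l) = Z l * (Z l)ᵀ ∧ tp n t = Z l * (Z l)ᴴ) →
      ∀ l,
        Matrix.fromBlocks (tp n (fun m => star (t m))) (hk n (fun m => star (X m l)))
            (hk n (fun m => X m l)) (tp n t) =
          (Matrix.of fun (i : Fin n ⊕ Fin n) (k : Fin K) =>
              Sum.elim (fun j => star (Z l j k)) (fun j => Z l j k) i) *
          (Matrix.of fun (i : Fin n ⊕ Fin n) (k : Fin K) =>
              Sum.elim (fun j => star (Z l j k)) (fun j => Z l j k) i)ᴴ ∧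
        (Matrix.fromBlocks (tp n (fun m => star (t m))) (hk n (fun m => star (X m l)))
            (hk n (fun m => X m l)) (tp n t)).PosSemidef ∧
        (Matrix.fromBlocks (tp n (fun m => star (t m))) (hk n (fun m => star (X m l)))
            (hk n (fun m => X m l)) (tp n t)).rank ≤ K :=
  SMFC_subset_SHTC_general n K L
end

section
/- Equivalence of the structured constraints: given Z_1^l, Z_2^l ∈ ℂ^{n×K} for l = 1,…,L, the following are equivalent. (i) There exist X ∈ ℂ^{N×L} and t^1,…,t^L ∈ ℂ^N such that for every l: 𝓗 X_{:,l} = Z_2^l (Z_1^l)^H, 𝓣 conj(t^l) = Z_1^l (Z_1^l)^H, and (1/L) Σ_{q=1}^L 𝓣 t^q = Z_2^l (Z_2^l)^H. (ii) For every l: (𝓘 − 𝓖𝓖*)(Z_2^l (Z_1^l)^H) = 0, (𝓘 − 𝓦𝓦*)(Z_1^l (Z_1^l)^H) = 0, and Σ_{q=1}^L conj(Z_1^q) (Z_1^q)^T = L · Z_2^l (Z_2^l)^H. -/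
open Matrix Complex BigOperators
open scoped ComplexOrder

noncomputable section

/-- The adjoint `𝓗* : ℂ^{n×n} → ℂ^N` of the Hankel operator. -/
def hkAdj (n : ℕ) (M : Matrix (Fin n) (Fin n) ℂ) : Fin (2*n-1) → ℂ :=
  fun m => ∑ j : Fin n, ∑ k : Fin n, if j.1 + k.1 = m.1 then M j k else 0

/-- The adjoint `𝓣* : ℂ^{n×n} → ℂ^N` of the Toeplitz operator. -/
def tpAdj (n : ℕ) (M : Matrix (Fin n) (Fin n) ℂ) : Fin (2*n-1) → ℂ :=
  fun m => ∑ j : Fin n, ∑ k : Fin n, if n - 1 + j.1 - k.1 = m.1 then M j k else 0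

/-- `a_m = n - |m - n|` (1-indexed), the number of entries on the m-th
(skew-)diagonal of an `n×n` matrix. -/
def wt (n : ℕ) : Fin (2*n-1) → ℕ := fun m => n - ((m.1 + 1 : ℤ) - n).natAbs

/-- The inverse `𝓓⁻¹` of the diagonal weighting operator `𝓓x = (√(a_m) x_m)_m`. -/
def Dinv (n : ℕ) (x : Fin (2*n-1) → ℂ) : Fin (2*n-1) → ℂ :=
  fun m => ((Real.sqrt (wt n m) : ℂ))⁻¹ * x m

lemma wt_pos (n : ℕ) (hn : 1 ≤ n) (m : Fin (2*n-1)) : 0 < wt n m := by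
  have := m.2
  simp only [wt]
  omega

lemma card_aux (n : ℕ) (hn : 1 ≤ n) (m : Fin (2*n-1)) :
    ((Finset.range n).filter (fun j => j ≤ m.1 ∧ m.1 - j < n)).card = wt n m := by
  have hm := m.2
  have : (Finset.range n).filter (fun j => j ≤ m.1 ∧ m.1 - j < n)
      = Finset.Ico (m.1 + 1 - n) (min (m.1 + 1) n) := by
    ext j
    simp only [Finset.mem_filter, Finset.mem_range, Finset.mem_Ico]
    omega
  rw [this, Nat.card_Ico]
  simp only [wt]
  omega

lemma hkAdj_hk (n : ℕ) (hn : 1 ≤ n) (x : Fin (2*n-1) → ℂ) :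
    hkAdj n (hk n x) = fun m => (wt n m : ℂ) * x m := by
  funext m
  have hm := m.2
  have inner : ∀ j : Fin n, (∑ k : Fin n, if j.1 + k.1 = m.1 then hk n x j k else 0)
      = if j.1 ≤ m.1 ∧ m.1 - j.1 < n then x m else 0 := by
    intro j
    by_cases h : j.1 ≤ m.1 ∧ m.1 - j.1 < n
    · rw [if_pos h]
      rw [Finset.sum_eq_single (⟨m.1 - j.1, h.2⟩ : Fin n)]
      · have : j.1 + (m.1 - j.1) = m.1 := by omega
        rw [if_pos this]
        simp only [hk, Matrix.of_apply]
        congr 1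
        exact Fin.ext this
      · intro k _ hk'
        apply if_neg
        intro hc
        apply hk'
        exact Fin.ext (show k.1 = m.1 - j.1 by omega)
      · intro h'; exact absurd (Finset.mem_univ _) h'
    · rw [if_neg h]
      apply Finset.sum_eq_zero
      intro k _
      apply if_neg
      intro hc
      have := k.2
      omega
  simp only [hkAdj]
  rw [Finset.sum_congr rfl (fun j _ => inner j)]
  rw [Fin.sum_univ_eq_sum_range (fun j => if j ≤ m.1 ∧ m.1 - j < n then x m else 0)]
  rw [← Finset.sum_filter, Finset.sum_const, card_aux n hn m, nsmul_eq_mul]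

lemma tpAdj_tp (n : ℕ) (hn : 1 ≤ n) (x : Fin (2*n-1) → ℂ) :
    tpAdj n (tp n x) = fun m => (wt n m : ℂ) * x m := by
  funext m
  have hm := m.2
  have inner : ∀ j : Fin n, (∑ k : Fin n, if n - 1 + j.1 - k.1 = m.1 then tp n x j k else 0)
      = if j.1 ≤ m.1 ∧ m.1 - j.1 < n then x m else 0 := by
    intro j
    have hj := j.2
    by_cases h : j.1 ≤ m.1 ∧ m.1 - j.1 < n
    · rw [if_pos h]
      have hk2 : n - 1 + j.1 - m.1 < n := by omega
      rw [Finset.sum_eq_single (⟨n - 1 + j.1 - m.1, hk2⟩ : Fin n)]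
      · have : n - 1 + j.1 - (n - 1 + j.1 - m.1) = m.1 := by omega
        rw [if_pos this]
        simp only [tp, Matrix.of_apply]
        congr 1
        exact Fin.ext this
      · intro k _ hk'
        apply if_neg
        intro hc
        apply hk'
        have := k.2
        exact Fin.ext (show k.1 = n - 1 + j.1 - m.1 by omega)
      · intro h'; exact absurd (Finset.mem_univ _) h'
    · rw [if_neg h]
      apply Finset.sum_eq_zero
      intro k _
      apply if_neg
      intro hc
      have := k.2
      omega
  simp only [tpAdj]
  rw [Finset.sum_congr rfl (fun j _ => inner j)]
  rw [Fin.sum_univ_eq_sum_range (fun j => if j ≤ m.1 ∧ m.1 - j < n then x m else 0)]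
  rw [← Finset.sum_filter, Finset.sum_const, card_aux n hn m, nsmul_eq_mul]

lemma dinv_dinv (n : ℕ) (hn : 1 ≤ n) (x : Fin (2*n-1) → ℂ) :
    Dinv n (Dinv n (fun m => (wt n m : ℂ) * x m)) = x := by
  funext m
  have hw := wt_pos n hn m
  have hw' : (0:ℝ) ≤ (wt n m : ℝ) := Nat.cast_nonneg _
  have hs : (Real.sqrt (wt n m) : ℂ) * (Real.sqrt (wt n m) : ℂ) = (wt n m : ℂ) := by
    rw [← Complex.ofReal_mul, Real.mul_self_sqrt hw']
    norm_cast
  have hne : (Real.sqrt (wt n m) : ℂ) ≠ 0 := by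
    simp only [ne_eq, Complex.ofReal_eq_zero]
    positivity
  simp only [Dinv]
  field_simp
  rw [← hs]
  ring

lemma tp_star (n : ℕ) (t : Fin (2*n-1) → ℂ) (A : Matrix (Fin n) (Fin n) ℂ)
    (h : tp n (fun m => star (t m)) = A) : tp n t = A.map star := by
  subst h
  ext j k
  simp [tp, Matrix.map_apply]

lemma mapstar_mul {n K : ℕ} (Z : Matrix (Fin n) (Fin K) ℂ) :
    Z.map star * Zᵀ = (Z * Zᴴ).map star := by
  ext j k
  simp only [Matrix.mul_apply, Matrix.map_apply, Matrix.conjTranspose_apply,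
    Matrix.transpose_apply, star_sum, star_mul']
  apply Finset.sum_congr rfl
  intro c _
  simp

/-- Equivalence of the structured constraints: (i) there exist `X` and `t^1,…,t^L` with
`𝓗 X_{:,l} = Z_2^l (Z_1^l)ᴴ`, `𝓣 conj(t^l) = Z_1^l (Z_1^l)ᴴ`, and
`(1/L) Σ_q 𝓣 t^q = Z_2^l (Z_2^l)ᴴ` for all `l`, iff (ii) for all `l`,
`(𝓘 − 𝓖𝓖*)(Z_2^l (Z_1^l)ᴴ) = 0`, `(𝓘 − 𝓦𝓦*)(Z_1^l (Z_1^l)ᴴ) = 0`, and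
`Σ_q conj(Z_1^q) (Z_1^q)ᵀ = L · Z_2^l (Z_2^l)ᴴ`. -/
theorem structured_constraints_iff (n K L : ℕ) (hn : 1 ≤ n) (hK : 1 ≤ K) (hL : 1 ≤ L)
    (Z1 Z2 : Fin L → Matrix (Fin n) (Fin K) ℂ) :
    (∃ (X : Matrix (Fin (2*n-1)) (Fin L) ℂ) (tl : Fin L → Fin (2*n-1) → ℂ),
      ∀ l, hk n (fun m => X m l) = Z2 l * (Z1 l)ᴴ ∧
           tp n (fun m => star (tl l m)) = Z1 l * (Z1 l)ᴴ ∧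
           (L : ℂ)⁻¹ • (∑ q, tp n (tl q)) = Z2 l * (Z2 l)ᴴ) ↔
    (∀ l, (Z2 l * (Z1 l)ᴴ) - hk n (Dinv n (Dinv n (hkAdj n (Z2 l * (Z1 l)ᴴ)))) = 0 ∧
          (Z1 l * (Z1 l)ᴴ) - tp n (Dinv n (Dinv n (tpAdj n (Z1 l * (Z1 l)ᴴ)))) = 0 ∧
          (∑ q, (Z1 q).map star * (Z1 q)ᵀ) = (L : ℂ) • (Z2 l * (Z2 l)ᴴ)) := by
  have hLne : (L : ℂ) ≠ 0 := by
    simp only [ne_eq, Nat.cast_eq_zero]; omega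
  constructor
  · rintro ⟨X, tl, h⟩ l
    obtain ⟨h1, h2, h3⟩ := h l
    have sumtp : (∑ q, (Z1 q).map star * (Z1 q)ᵀ) = ∑ q, tp n (tl q) := by
      apply Finset.sum_congr rfl
      intro q _
      rw [mapstar_mul, ← tp_star n (tl q) _ (h q).2.1]
    refine ⟨?_, ?_, ?_⟩
    · rw [← h1, hkAdj_hk n hn, dinv_dinv n hn, sub_self]
    · rw [← h2, tpAdj_tp n hn, dinv_dinv n hn, sub_self]
    · rw [sumtp, ← h3, smul_smul, mul_inv_cancel₀ hLne, one_smul]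
  · intro h
    refine ⟨Matrix.of fun m l => Dinv n (Dinv n (hkAdj n (Z2 l * (Z1 l)ᴴ))) m,
      fun l m => star (Dinv n (Dinv n (tpAdj n (Z1 l * (Z1 l)ᴴ))) m), ?_⟩
    intro l
    have h1 := sub_eq_zero.mp (h l).1
    have h2 := sub_eq_zero.mp (h l).2.1
    have h3 := (h l).2.2
    have ht2 : ∀ q, tp n (fun m => star (star (Dinv n (Dinv n (tpAdj n (Z1 q * (Z1 q)ᴴ))) m)))
        = Z1 q * (Z1 q)ᴴ := by
      intro q
      simp only [star_star]
      exact (sub_eq_zero.mp (h q).2.1).symm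
    refine ⟨h1.symm, ht2 l, ?_⟩
    have stq : ∀ q, tp n (fun m => star (Dinv n (Dinv n (tpAdj n (Z1 q * (Z1 q)ᴴ))) m))
        = (Z1 q * (Z1 q)ᴴ).map star := by
      intro q
      exact tp_star n _ _ (ht2 q)
    rw [Finset.sum_congr rfl (fun q _ => stq q)]
    have : (∑ q, ((Z1 q * (Z1 q)ᴴ).map star : Matrix (Fin n) (Fin n) ℂ))
        = ∑ q, (Z1 q).map star * (Z1 q)ᵀ := by
      exact Finset.sum_congr rfl fun q _ => (mapstar_mul (Z1 q)).symm
    rw [this, h3, smul_smul, inv_mul_cancel₀ hLne, one_smul]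
end
end
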